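/- Value error bound for MDPs: Let P₁ and P₂ be row-stochastic matrices, R a vector, γ ∈ [0,1), and define V₁ = (I - γP₁)^{-1}R and V₂ = (I - γP₂)^{-1}R. Then ‖V₁ - V₂‖_∞ ≤ (γ/(1-γ)²)·‖R‖_∞·‖P₁ - P₂‖_∞. -/

import Mathlib

/-!
With `Aᵢ = 1 - γ • Pᵢ`, the resolvent identity gives
`A₁⁻¹ - A₂⁻¹ = γ • A₁⁻¹ * (P₁ - P₂) * A₂⁻¹`. A row-stochastic matrix has `ℓ∞` operator norm at
most `1`, so `‖Aᵢ v‖ ≥ (1 - γ) ‖v‖`; hence each `Aᵢ` is invertible with `‖Aᵢ⁻¹‖ ≤ 1 / (1 - γ)`,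
and the bound follows by submultiplicativity.
-/

open Matrix

namespace Matrix

attribute [local instance] Matrix.linftyOpSeminormedAddCommGroup

variable {m n α : Type*} [Fintype m] [Fintype n]

theorem linfty_opNorm_eq_iSup_sum_norm [SeminormedAddCommGroup α] (A : Matrix m n α) :
    ‖A‖ = ⨆ i, ∑ j, ‖A i j‖ := by
  rw [linfty_opNorm_def, Finset.sup_univ_eq_ciSup, NNReal.coe_iSup]
  simp

variable [DecidableEq n]

theorem linfty_opNorm_le_one_of_mem_rowStochastic {P : Matrix n n ℝ}
    (hP : P ∈ rowStochastic ℝ n) : ‖P‖ ≤ 1 := by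
  rw [linfty_opNorm_eq_iSup_sum_norm]
  refine Real.iSup_le (fun i => ?_) zero_le_one
  simp_rw [Real.norm_of_nonneg (nonneg_of_mem_rowStochastic hP),
    sum_row_of_mem_rowStochastic hP i, le_refl]

theorem one_sub_mul_norm_le_norm_one_sub_smul_mulVec {P : Matrix n n ℝ} (hP : ‖P‖ ≤ 1)
    {γ : ℝ} (hγ : 0 ≤ γ) (v : n → ℝ) : (1 - γ) * ‖v‖ ≤ ‖(1 - γ • P) *ᵥ v‖ := by
  have hPv : ‖P *ᵥ v‖ ≤ ‖v‖ :=
    (linfty_opNorm_mulVec P v).trans (mul_le_of_le_one_left (norm_nonneg v) hP)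
  have hv : v = (1 - γ • P) *ᵥ v + γ • P *ᵥ v := by
    rw [sub_mulVec, one_mulVec, smul_mulVec, sub_add_cancel]
  have := calc ‖v‖ = ‖(1 - γ • P) *ᵥ v + γ • P *ᵥ v‖ := congrArg _ hv
    _ ≤ ‖(1 - γ • P) *ᵥ v‖ + ‖γ • P *ᵥ v‖ := norm_add_le _ _
    _ = ‖(1 - γ • P) *ᵥ v‖ + γ * ‖P *ᵥ v‖ := by rw [norm_smul, Real.norm_of_nonneg hγ]
  nlinarith

theorem isUnit_one_sub_smul {P : Matrix n n ℝ} (hP : ‖P‖ ≤ 1) {γ : ℝ} (hγ0 : 0 ≤ γ)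
    (hγ1 : γ < 1) : IsUnit (1 - γ • P) := by
  rw [isUnit_iff_isUnit_det, isUnit_iff_ne_zero]
  intro hdet
  obtain ⟨v, hv0, hv⟩ := exists_mulVec_eq_zero_iff.mpr hdet
  have := one_sub_mul_norm_le_norm_one_sub_smul_mulVec hP hγ0 v
  rw [hv, norm_zero] at this
  exact hv0 (norm_le_zero_iff.mp (nonpos_of_mul_nonpos_right this (by linarith)))

theorem norm_inv_one_sub_smul_mulVec_le {P : Matrix n n ℝ} (hP : ‖P‖ ≤ 1) {γ : ℝ}
    (hγ0 : 0 ≤ γ) (hγ1 : γ < 1) (w : n → ℝ) : ‖(1 - γ • P)⁻¹ *ᵥ w‖ ≤ ‖w‖ / (1 - γ) := by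
  have h := one_sub_mul_norm_le_norm_one_sub_smul_mulVec hP hγ0 ((1 - γ • P)⁻¹ *ᵥ w)
  rw [mulVec_mulVec, mul_nonsing_inv _ ((isUnit_iff_isUnit_det _).mp
    (isUnit_one_sub_smul hP hγ0 hγ1)), one_mulVec] at h
  rwa [le_div_iff₀' (by linarith)]

theorem norm_inv_one_sub_smul_mulVec_sub_le {P₁ P₂ : Matrix n n ℝ} (hP₁ : ‖P₁‖ ≤ 1)
    (hP₂ : ‖P₂‖ ≤ 1) {γ : ℝ} (hγ0 : 0 ≤ γ) (hγ1 : γ < 1) (R : n → ℝ) :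
    ‖(1 - γ • P₁)⁻¹ *ᵥ R - (1 - γ • P₂)⁻¹ *ᵥ R‖ ≤ γ / (1 - γ) ^ 2 * ‖R‖ * ‖P₁ - P₂‖ := by
  have hunit : IsUnit (1 - γ • P₁) ↔ IsUnit (1 - γ • P₂) :=
    iff_of_true (isUnit_one_sub_smul hP₁ hγ0 hγ1) (isUnit_one_sub_smul hP₂ hγ0 hγ1)
  have h1γ : 0 < 1 - γ := by linarith
  rw [← sub_mulVec, inv_sub_inv hunit, sub_sub_sub_cancel_left, ← smul_sub, Matrix.mul_smul,
    Matrix.smul_mul, smul_mulVec, ← mulVec_mulVec, ← mulVec_mulVec, norm_smul,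
    Real.norm_of_nonneg hγ0]
  calc γ * ‖(1 - γ • P₁)⁻¹ *ᵥ (P₁ - P₂) *ᵥ (1 - γ • P₂)⁻¹ *ᵥ R‖
      ≤ γ * (‖(P₁ - P₂) *ᵥ (1 - γ • P₂)⁻¹ *ᵥ R‖ / (1 - γ)) := by
        gcongr; exact norm_inv_one_sub_smul_mulVec_le hP₁ hγ0 hγ1 _
    _ ≤ γ * (‖P₁ - P₂‖ * ‖(1 - γ • P₂)⁻¹ *ᵥ R‖ / (1 - γ)) := by
        gcongr; exact linfty_opNorm_mulVec _ _
    _ ≤ γ * (‖P₁ - P₂‖ * (‖R‖ / (1 - γ)) / (1 - γ)) := by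
        gcongr; exact norm_inv_one_sub_smul_mulVec_le hP₂ hγ0 hγ1 R
    _ = γ / (1 - γ) ^ 2 * ‖R‖ * ‖P₁ - P₂‖ := by field_simp

end Matrix

theorem stmt_5 (n : ℕ) (P₁ P₂ : Matrix (Fin n) (Fin n) ℝ)
    (hP₁0 : ∀ i j, 0 ≤ P₁ i j) (hP₁1 : ∀ i, ∑ j, P₁ i j = 1)
    (hP₂0 : ∀ i j, 0 ≤ P₂ i j) (hP₂1 : ∀ i, ∑ j, P₂ i j = 1)
    (γ : ℝ) (hγ0 : 0 ≤ γ) (hγ1 : γ < 1) (R : Fin n → ℝ)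
    (V₁ V₂ : Fin n → ℝ)
    (hV₁ : V₁ = ((1 - γ • P₁)⁻¹).mulVec R)
    (hV₂ : V₂ = ((1 - γ • P₂)⁻¹).mulVec R) :
    ‖V₁ - V₂‖ ≤ γ / (1 - γ) ^ 2 * ‖R‖ * (⨆ i, ∑ j, |(P₁ - P₂) i j|) := by
  let := Matrix.linftyOpSeminormedAddCommGroup (m := Fin n) (n := Fin n) (α := ℝ)
  have hP₁ := linfty_opNorm_le_one_of_mem_rowStochastic
    (mem_rowStochastic_iff_sum.mpr ⟨hP₁0, hP₁1⟩)
  have hP₂ := linfty_opNorm_le_one_of_mem_rowStochastic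
    (mem_rowStochastic_iff_sum.mpr ⟨hP₂0, hP₂1⟩)
  simp_rw [hV₁, hV₂, ← Real.norm_eq_abs, ← linfty_opNorm_eq_iSup_sum_norm]
  exact norm_inv_one_sub_smul_mulVec_sub_le hP₁ hP₂ hγ0 hγ1 R
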